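/- Let N ≥ 2, α ∈ (1/2, 1), b > 0 and c ∈ ℝ, and define w : ℝ^N → ℝ by w(x) = c + (α·(3/2 − α)^{1/2}/(b(1 − α)))·x₁ − x₁⁴/(12b²) + Σ_{i=2}^{N} (−b²·x_i² + b·(3/2 − α)^{1/2}·x₁·x_i² − x₁²·x_i²). Then there exists ρ > 0 such that for every x with 0 < ‖x‖ ≤ ρ, the Hessian matrix D²w(x) is negative definite, i.e. vᵀ·D²w(x)·v < 0 for every nonzero v ∈ ℝ^N. -/

import Mathlib

/-! With `t = x₁` and `B = b √(3/2 - α)`, the datum is `w x = f t + ∑_{i ≥ 2} g t * x_i²` with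
`f'' t = -t²/b²` and `g t = -b² + B t - t²`. Its Hessian form at `x` in direction `v` is
`f'' t * v₁² + ∑_{i ≥ 2} q (x_i v₁, v_i)`, where `q X Y = -2 X² + 4 g' t X Y + 2 g t Y²`.
The binary form `q` is negative definite iff `g' t ² < -g t`; at `t = 0` this is `B² < b²`,
i.e. `α > 1/2`, so it persists for `x` near `0`. Then every summand is `≤ 0`, and for `x ≠ 0`,
`v ≠ 0` one of them is `< 0`. -/

section SecondDerivative

variable {ι : Type*} [Fintype ι] {f f' f'' g g' g'' : ℝ → ℝ}

theorem HasDerivAt.comp_euclideanSpace_apply {φ : ℝ → ℝ} {φ' : ℝ} (k : ι)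
    {y : EuclideanSpace ℝ ι} (hφ : HasDerivAt φ φ' (y k)) :
    HasFDerivAt (fun x : EuclideanSpace ℝ ι => φ (x k)) (φ' • PiLp.proj (𝕜 := ℝ) 2 _ k) y :=
  hφ.comp_hasFDerivAt y (PiLp.hasFDerivAt_apply 2 y k)

theorem fderiv_add_sum_mul_sq_apply (hf : ∀ t, HasDerivAt f (f' t) t)
    (hg : ∀ t, HasDerivAt g (g' t) t) (k : ι) (s : Finset ι) (y v : EuclideanSpace ℝ ι) :
    fderiv ℝ (fun x : EuclideanSpace ℝ ι => f (x k) + ∑ i ∈ s, g (x k) * x i ^ 2) y v =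
      f' (y k) * v k + ∑ i ∈ s, (g' (y k) * v k * y i ^ 2 + 2 * g (y k) * v i * y i) := by
  have hsq (i : ι) := (PiLp.hasFDerivAt_apply (𝕜 := ℝ) 2 y i).pow 2
  rw [((hf (y k)).comp_euclideanSpace_apply k).fun_add (HasFDerivAt.fun_sum fun i _ =>
    ((hg (y k)).comp_euclideanSpace_apply k).fun_mul (hsq i)) |>.fderiv]
  simp only [Nat.add_one_sub_one, pow_one, nsmul_eq_mul, Nat.cast_ofNat, add_apply, smul_apply,
    PiLp.proj_apply, smul_eq_mul, sum_apply, add_right_inj]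
  exact Finset.sum_congr rfl fun i _ => by ring

theorem fderiv_fderiv_add_sum_mul_sq_apply (hf : ∀ t, HasDerivAt f (f' t) t)
    (hf' : ∀ t, HasDerivAt f' (f'' t) t) (hg : ∀ t, HasDerivAt g (g' t) t)
    (hg' : ∀ t, HasDerivAt g' (g'' t) t) (k : ι) (s : Finset ι) (x v : EuclideanSpace ℝ ι) :
    fderiv ℝ (fun y => fderiv ℝ
        (fun x : EuclideanSpace ℝ ι => f (x k) + ∑ i ∈ s, g (x k) * x i ^ 2) y v) x v =
      f'' (x k) * v k ^ 2 + ∑ i ∈ s, (g'' (x k) * (x i * v k) ^ 2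
        + 4 * g' (x k) * (x i * v k) * v i + 2 * g (x k) * v i ^ 2) := by
  simp_rw [fderiv_add_sum_mul_sq_apply hf hg]
  have hcoord (i : ι) := PiLp.hasFDerivAt_apply (𝕜 := ℝ) 2 x i
  rw [(((hf' (x k)).comp_euclideanSpace_apply k).mul_const (v k)).fun_add
    (HasFDerivAt.fun_sum fun i _ =>
      ((((hg' (x k)).comp_euclideanSpace_apply k).mul_const (v k)).fun_mul
        ((hcoord i).pow 2)).fun_add
      (((((hg (x k)).comp_euclideanSpace_apply k).const_mul 2).mul_const (v i)).fun_mul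
        (hcoord i))) |>.fderiv]
  simp only [Nat.add_one_sub_one, pow_one, nsmul_eq_mul, Nat.cast_ofNat, add_apply, smul_apply,
    PiLp.proj_apply, smul_eq_mul, sum_apply]
  congr 1
  · ring
  · exact Finset.sum_congr rfl fun i _ => by ring

end SecondDerivative

theorem quadratic_neg_of_discrim_neg {a b c x y : ℝ} (ha : a < 0) (hd : discrim a b c < 0)
    (hxy : x ≠ 0 ∨ y ≠ 0) : a * x ^ 2 + b * x * y + c * y ^ 2 < 0 := by
  rcases eq_or_ne y 0 with rfl | hy
  · have hx : x ≠ 0 := by simpa using hxy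
    simpa using mul_neg_of_neg_of_pos ha (sq_pos_of_ne_zero hx)
  · have hsq : 4 * a * (a * x ^ 2 + b * x * y + c * y ^ 2)
        = (2 * a * x + b * y) ^ 2 - discrim a b c * y ^ 2 := by rw [discrim]; ring
    have hpos : 0 < 4 * a * (a * x ^ 2 + b * x * y + c * y ^ 2) := by
      rw [hsq]; nlinarith [sq_nonneg (2 * a * x + b * y), sq_pos_of_ne_zero hy]
    exact neg_of_mul_pos_right hpos (by linarith)

theorem quadratic_nonpos_of_discrim_neg {a b c : ℝ} (ha : a < 0) (hd : discrim a b c < 0)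
    (x y : ℝ) : a * x ^ 2 + b * x * y + c * y ^ 2 ≤ 0 := by
  by_cases hxy : x ≠ 0 ∨ y ≠ 0
  · exact (quadratic_neg_of_discrim_neg ha hd hxy).le
  · obtain ⟨rfl, rfl⟩ : x = 0 ∧ y = 0 := by tauto
    simp

theorem mul_sq_add_sum_quadratic_neg {ι : Type*} [Fintype ι] [DecidableEq ι] (k : ι)
    {a₀ a b c : ℝ} (ha₀ : a₀ < 0) (ha : a < 0) (hd : discrim a b c < 0) {x v : ι → ℝ}
    (hx : x ≠ 0) (hv : v ≠ 0) :
    a₀ * (x k * v k) ^ 2 + ∑ i ∈ Finset.univ.erase k,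
      (a * (x i * v k) ^ 2 + b * (x i * v k) * v i + c * v i ^ 2) < 0 := by
  have hfirst : a₀ * (x k * v k) ^ 2 ≤ 0 := mul_nonpos_of_nonpos_of_nonneg ha₀.le (sq_nonneg _)
  have hsum := Finset.sum_nonpos fun i (_ : i ∈ Finset.univ.erase k) =>
    quadratic_nonpos_of_discrim_neg ha hd (x i * v k) (v i)
  suffices a₀ * (x k * v k) ^ 2 < 0 ∨ ∃ i ∈ Finset.univ.erase k,
      a * (x i * v k) ^ 2 + b * (x i * v k) * v i + c * v i ^ 2 < 0 by
    rcases this with h | h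
    · linarith
    · linarith [Finset.sum_neg' (fun i _ => quadratic_nonpos_of_discrim_neg ha hd _ _) h]
  have mem_erase {j : ι} (hj : j ≠ k) : j ∈ Finset.univ.erase k :=
    Finset.mem_erase.2 ⟨hj, Finset.mem_univ j⟩
  by_cases hvk : v k = 0
  · obtain ⟨j, hj⟩ := Function.ne_iff.1 hv
    have hjk : j ≠ k := by rintro rfl; exact hj hvk
    exact Or.inr ⟨j, mem_erase hjk, quadratic_neg_of_discrim_neg ha hd (Or.inr hj)⟩
  · obtain ⟨j, hj⟩ := Function.ne_iff.1 hx
    by_cases hjk : j = k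
    · subst hjk
      exact Or.inl (mul_neg_of_neg_of_pos ha₀ (sq_pos_of_ne_zero (mul_ne_zero hj hvk)))
    · exact Or.inr ⟨j, mem_erase hjk,
        quadratic_neg_of_discrim_neg ha hd (Or.inl (mul_ne_zero hj hvk))⟩

theorem hasDerivAt_add_mul_sub_pow_four_div (c A d t : ℝ) :
    HasDerivAt (fun t => c + A * t - t ^ 4 / (12 * d)) (A - t ^ 3 / (3 * d)) t :=
  ((((hasDerivAt_id t).const_mul A).const_add c).sub
    ((hasDerivAt_pow 4 t).div_const (12 * d))).congr_deriv (by norm_num; ring)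

theorem hasDerivAt_sub_pow_three_div (A d t : ℝ) :
    HasDerivAt (fun t => A - t ^ 3 / (3 * d)) (-(t ^ 2 / d)) t :=
  (((hasDerivAt_pow 3 t).div_const (3 * d)).const_sub A).congr_deriv (by norm_num; ring)

theorem hasDerivAt_add_mul_sub_sq (a B t : ℝ) :
    HasDerivAt (fun t => a + B * t - t ^ 2) (B - 2 * t) t :=
  ((((hasDerivAt_id t).const_mul B).const_add a).sub (hasDerivAt_pow 2 t)).congr_deriv
    (by norm_num)

theorem hasDerivAt_sub_two_mul (B t : ℝ) : HasDerivAt (fun t => B - 2 * t) (-2) t := by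
  simpa using ((hasDerivAt_id t).const_mul 2).const_sub B

/-- For `α ∈ (1/2, 1)`, `b > 0`, and
`w(x) = c + (α(3/2-α)^{1/2}/(b(1-α))) x₁ - x₁⁴/(12b²)
  + Σ_{i=2}^N (-b² x_i² + b(3/2-α)^{1/2} x₁ x_i² - x₁² x_i²)` on `ℝ^N` (`N ≥ 2`),
there is `ρ > 0` such that the Hessian of `w` is negative definite at every `x`
with `0 < ‖x‖ ≤ ρ`. -/
theorem stmt_9 (N : ℕ) (hN : 2 ≤ N) (α b c : ℝ)
    (hα : α ∈ Set.Ioo (1/2 : ℝ) 1) (hb : 0 < b)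
    (w : EuclideanSpace ℝ (Fin N) → ℝ)
    (hw : ∀ x : EuclideanSpace ℝ (Fin N),
      w x = c + (α * Real.sqrt (3/2 - α) / (b * (1 - α))) * x ⟨0, by omega⟩
        - (x ⟨0, by omega⟩) ^ 4 / (12 * b ^ 2) +
        ∑ i : Fin N, if i ≠ ⟨0, by omega⟩ then
          -(b ^ 2) * (x i) ^ 2 + b * Real.sqrt (3/2 - α) * x ⟨0, by omega⟩ * (x i) ^ 2
            - (x ⟨0, by omega⟩) ^ 2 * (x i) ^ 2
        else 0) :
    ∃ ρ : ℝ, 0 < ρ ∧ ∀ x : EuclideanSpace ℝ (Fin N), 0 < ‖x‖ → ‖x‖ ≤ ρ →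
      ∀ v : EuclideanSpace ℝ (Fin N), v ≠ 0 →
        fderiv ℝ (fun y => fderiv ℝ w y v) x v < 0 := by
  set k : Fin N := ⟨0, by omega⟩
  set A := α * Real.sqrt (3/2 - α) / (b * (1 - α))
  set B := b * Real.sqrt (3/2 - α)
  have hB : B ^ 2 < b ^ 2 := by
    rw [mul_pow, Real.sq_sqrt (by linarith [hα.2])]
    nlinarith [mul_pos (pow_pos hb 2) (sub_pos.2 hα.1)]
  have hw' : w = fun x => c + A * x k - x k ^ 4 / (12 * b ^ 2) +
      ∑ i ∈ Finset.univ.erase k, (-b ^ 2 + B * x k - x k ^ 2) * x i ^ 2 := by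
    funext x
    rw [hw x, ← Finset.filter_ne', Finset.sum_filter]
    exact congrArg _ (Finset.sum_congr rfl fun i _ => by split_ifs <;> ring)
  obtain ⟨ε, hε, hsmall⟩ := Metric.eventually_nhds_iff.1 <|
    ContinuousAt.eventually_lt (x₀ := (0 : EuclideanSpace ℝ (Fin N)))
      (f := fun x => (B - 2 * x k) ^ 2) (g := fun x => b ^ 2 - B * x k + x k ^ 2)
      (by fun_prop) (by fun_prop) (by simpa using hB)
  refine ⟨ε / 2, half_pos hε, fun x hx₀ hxε v hv => ?_⟩
  have hdisc := hsmall (y := x) (by rw [dist_zero_right]; linarith)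
  rw [hw', fderiv_fderiv_add_sum_mul_sq_apply (hasDerivAt_add_mul_sub_pow_four_div c A _)
    (hasDerivAt_sub_pow_three_div A _) (hasDerivAt_add_mul_sub_sq _ B) (hasDerivAt_sub_two_mul B)]
  convert mul_sq_add_sum_quadratic_neg k (a₀ := -(b ^ 2)⁻¹) (b := 4 * (B - 2 * x k))
    (c := 2 * (-b ^ 2 + B * x k - x k ^ 2)) (x := x.ofLp) (v := v.ofLp)
    (neg_lt_zero.2 (inv_pos.2 (pow_pos hb 2))) (neg_lt_zero.2 two_pos)
    (by rw [discrim]; linarith) (by simpa using norm_pos_iff.1 hx₀) (by simpa using hv) using 2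
  ring
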